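/- arXiv:2001.10986 — 3 statements merged into one kernel-verified Lean document; each statement's English description precedes it below -/
import Mathlib

section
/- (Primal-dual gap bound) Let {X_i}_{i∈I} be a finite measurable partition of X, K_i := K restricted to X_i×Y, and let π̃ := Σ_{i∈I} (ũ_i⊗ṽ_i)·K_i with ũ_i ∈ L^∞₊(X,μ), ṽ_i ∈ L^∞₊(Y,ν), and π̂ := (û⊗v̂)·K with û ∈ L^∞₊(X,μ), v̂ ∈ L^∞₊(Y,ν). If π̃ ∈ Π(μ,ν), then Δ(π̃) ≤ KL(π̃|π̂), where Δ(π) := KL(π|K) − KL(π*|K) and π* is the unique minimizer of KL(·|K) over Π(μ,ν). -/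
open MeasureTheory ENNReal Filter Topology

noncomputable section

/-- `phi s = s * log s - s + 1` (note `phi 0 = 1` since `Real.log 0 = 0`);
this is the integrand of the Kullback--Leibler divergence. -/
def phi (s : ℝ) : ℝ := s * Real.log s - s + 1

open Classical in
/-- Kullback--Leibler divergence `KL(ρ|σ) ∈ [0,∞]`: `∫ phi (dρ/dσ) dσ` if `ρ ≪ σ`,
and `∞` otherwise (nonnegativity of `ρ` is automatic for measures). -/
def KL {Z : Type*} [MeasurableSpace Z] (ρ σ : Measure Z) : ℝ≥0∞ :=
  if ρ ≪ σ then ∫⁻ z, ENNReal.ofReal (phi ((ρ.rnDeriv σ) z).toReal) ∂σ else ⊤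

/-- The set `Π(μh, νh)` of transport plans with marginals `μh` and `νh`. -/
def Coupling {X Y : Type*} [MeasurableSpace X] [MeasurableSpace Y]
    (μh : Measure X) (νh : Measure Y) : Set (Measure (X × Y)) :=
  {π | π.map Prod.fst = μh ∧ π.map Prod.snd = νh}

/-- The Gibbs kernel measure `K = exp(-c/ε) ⋅ (μ ⊗ ν)`. -/
def Kmeas {X Y : Type*} [MeasurableSpace X] [MeasurableSpace Y]
    (μ : Measure X) (ν : Measure Y) [SFinite ν] (c : X × Y → ℝ) (ε : ℝ) : Measure (X × Y) :=
  (μ.prod ν).withDensity fun p => ENNReal.ofReal (Real.exp (-c p / ε))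

/-- The product density `(u ⊗ v)(x,y) = u x * v y`, as an `ℝ≥0∞`-valued density. -/
def prodDensity {X Y : Type*} (u : X → ℝ) (v : Y → ℝ) : X × Y → ℝ≥0∞ :=
  fun p => ENNReal.ofReal (u p.1 * v p.2)

/-- `L^∞₊(μ)`: measurable, a.e. nonnegative, essentially bounded functions. -/
def LinftyPlus {Z : Type*} [MeasurableSpace Z] (μ : Measure Z) (u : Z → ℝ) : Prop :=
  Measurable u ∧ (∀ᵐ z ∂μ, 0 ≤ u z) ∧ ∃ C : ℝ, ∀ᵐ z ∂μ, u z ≤ C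

/-!
Weak duality. Write `f = û ⊗ v̂`, so that `π̂ = f • K`, and let `g = dπ̃/dπ̂`. Integrating the pointwise
identity `φ(g f) = f φ(g) + g f log f + 1 - f` against `K` gives
`KL(π̃|K) = KL(π̃|π̂) + ∫ log f dπ̃ + K(1) - ∫ f dK`.
Since `π̃ ≪ π̂` has marginals `μ` and `ν`, the potentials `û` and `v̂` are a.e. positive, so
`log f = log û ⊕ log v̂` and its integral depends only on the marginals: it is the same against `π*`.
Finally the Fenchel–Young inequality `h log f ≤ φ(h) - 1 + f`, applied to `h = dπ*/dK`, gives
`∫ log f dπ* ≤ KL(π*|K) - K(1) + ∫ f dK`.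
-/

@[fun_prop]
lemma measurable_phi : Measurable phi := by
  unfold phi
  fun_prop

lemma mul_log_le_phi_sub_one_add {a b : ℝ} (ha : 0 ≤ a) (hb : 0 < b) :
    a * Real.log b ≤ phi a - 1 + b := by
  rcases ha.eq_or_lt with rfl | ha
  · simpa [phi] using hb.le
  have hlog : Real.log (b / a) ≤ b / a - 1 := Real.log_le_sub_one_of_pos (by positivity)
  rw [Real.log_div hb.ne' ha.ne'] at hlog
  have hmul := mul_le_mul_of_nonneg_left hlog ha.le
  have hba : a * (b / a - 1) = b - a := by field_simp
  unfold phi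
  linarith

lemma phi_nonneg {s : ℝ} (hs : 0 ≤ s) : 0 ≤ phi s := by
  simpa using mul_log_le_phi_sub_one_add hs one_pos

lemma phi_mul {f g : ℝ} (hf : 0 ≤ f) (hg : 0 ≤ g) :
    phi (g * f) = f * phi g + g * f * Real.log f + (1 - f) := by
  rcases hf.eq_or_lt with rfl | hf
  · simp [phi]
  rcases hg.eq_or_lt with rfl | hg
  · simp [phi]
  unfold phi
  rw [Real.log_mul hg.ne' hf.ne']
  ring

lemma abs_mul_mul_log_le {f g C : ℝ} (hg : 0 ≤ g) (hf : 0 ≤ f) (hfC : f ≤ C) :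
    |g * f * Real.log f| ≤ g * f * C + f * phi g + 1 := by
  have hgf : 0 ≤ g * f := mul_nonneg hg hf
  have hupper : g * f * Real.log f ≤ g * f * C :=
    mul_le_mul_of_nonneg_left ((Real.log_le_self hf).trans hfC) hgf
  have hlower := phi_nonneg hgf
  rw [phi_mul hf hg] at hlower
  have : 0 ≤ f * phi g := mul_nonneg hf (phi_nonneg hg)
  have : 0 ≤ g * f * C := mul_nonneg hgf (hf.trans hfC)
  rw [abs_le]
  constructor <;> linarith

lemma integrable_of_integrable_add_of_ae_le {α : Type*} [MeasurableSpace α] {μ : Measure α}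
    [IsFiniteMeasure μ] {F G : α → ℝ} {a b : ℝ} (hF : AEStronglyMeasurable F μ)
    (hFG : Integrable (fun x => F x + G x) μ) (hFa : ∀ᵐ x ∂μ, F x ≤ a)
    (hGb : ∀ᵐ x ∂μ, G x ≤ b) : Integrable F μ := by
  refine Integrable.mono' ((hFG.abs.add (integrable_const |a|)).add (integrable_const |b|)) hF ?_
  filter_upwards [hFa, hGb] with x hx₁ hx₂
  rw [Pi.add_apply, Pi.add_apply, Real.norm_eq_abs, abs_le]
  constructor <;>
    linarith [le_abs_self a, le_abs_self b, abs_nonneg a, abs_nonneg b, neg_abs_le (F x + G x),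
      abs_nonneg (F x + G x)]

section KL

variable {Z : Type*} [MeasurableSpace Z] {ρ σ : Measure Z}

lemma KL_ne_top_iff :
    KL ρ σ ≠ ⊤ ↔ ρ ≪ σ ∧ Integrable (fun z => phi (ρ.rnDeriv σ z).toReal) σ := by
  unfold KL
  split_ifs with hac
  · exact (lintegral_ofReal_ne_top_iff_integrable (Measurable.aestronglyMeasurable (by fun_prop))
      (ae_of_all _ fun _ => phi_nonneg ENNReal.toReal_nonneg)).trans (and_iff_right hac).symm
  · simp [hac]

lemma toReal_KL (hac : ρ ≪ σ) :
    (KL ρ σ).toReal = ∫ z, phi (ρ.rnDeriv σ z).toReal ∂σ := by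
  rw [KL, if_pos hac, integral_eq_lintegral_of_nonneg_ae
    (ae_of_all _ fun _ => phi_nonneg ENNReal.toReal_nonneg)
    (measurable_phi.comp (Measure.measurable_rnDeriv ρ σ).ennreal_toReal).aestronglyMeasurable]

variable {f : Z → ℝ}

lemma KL_withDensity_ofReal (hf : Measurable f) (hf0 : 0 ≤ᵐ[σ] f)
    (hac : ρ ≪ σ.withDensity fun z => ENNReal.ofReal (f z)) :
    KL ρ (σ.withDensity fun z => ENNReal.ofReal (f z)) = ∫⁻ z,
      ENNReal.ofReal (f z * phi (ρ.rnDeriv (σ.withDensity fun z => ENNReal.ofReal (f z)) z).toReal)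
      ∂σ := by
  rw [KL, if_pos hac]
  refine (lintegral_withDensity_eq_lintegral_mul _ hf.ennreal_ofReal (by fun_prop)).trans
    (lintegral_congr_ae ?_)
  filter_upwards [hf0] with z hz
  exact (ENNReal.ofReal_mul hz).symm

lemma toReal_rnDeriv_ae_eq_mul [SigmaFinite σ] [SigmaFinite ρ] (hf : Measurable f)
    (hf0 : 0 ≤ᵐ[σ] f) (hac : ρ ≪ σ.withDensity fun z => ENNReal.ofReal (f z)) :
    (fun z => (ρ.rnDeriv σ z).toReal) =ᵐ[σ]
      fun z => (ρ.rnDeriv (σ.withDensity fun z => ENNReal.ofReal (f z)) z).toReal * f z := by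
  filter_upwards [Measure.rnDeriv_mul_rnDeriv (κ := σ) hac,
    Measure.rnDeriv_withDensity σ hf.ennreal_ofReal, hf0] with z hchain hdens hz
  rw [← hchain, Pi.mul_apply, hdens, ENNReal.toReal_mul, ENNReal.toReal_ofReal hz]

theorem toReal_KL_eq_toReal_KL_withDensity_add [IsFiniteMeasure σ] [IsFiniteMeasure ρ] {C : ℝ}
    (hf : Measurable f) (hfC : ∀ᵐ z ∂σ, 0 ≤ f z ∧ f z ≤ C)
    (hρ : KL ρ (σ.withDensity fun z => ENNReal.ofReal (f z)) ≠ ⊤) :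
    Integrable (fun z => Real.log (f z)) ρ ∧ KL ρ σ ≠ ⊤ ∧
      (KL ρ σ).toReal = (KL ρ (σ.withDensity fun z => ENNReal.ofReal (f z))).toReal
        + ∫ z, Real.log (f z) ∂ρ + σ.real Set.univ - ∫ z, f z ∂σ := by
  set σf := σ.withDensity fun z => ENNReal.ofReal (f z)
  set g := fun z => (ρ.rnDeriv σf z).toReal
  have hf0 : 0 ≤ᵐ[σ] f := hfC.mono fun _ hz => hz.1
  have hac : ρ ≪ σf := (KL_ne_top_iff.1 hρ).1
  have hρσ : ρ ≪ σ := hac.trans (withDensity_absolutelyContinuous _ _)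
  have hKLf := KL_withDensity_ofReal hf hf0 hac
  have hA : Integrable (fun z => f z * phi (g z)) σ := by
    rw [← lintegral_ofReal_ne_top_iff_integrable (by fun_prop) ?_, ← hKLf]
    · exact hρ
    · filter_upwards [hf0] with z hz using mul_nonneg hz (phi_nonneg ENNReal.toReal_nonneg)
  have hchain := toReal_rnDeriv_ae_eq_mul hf hf0 hac
  have hfi : Integrable f σ := Integrable.of_bound hf.aestronglyMeasurable C <| by
    filter_upwards [hfC] with z hz using by rw [Real.norm_of_nonneg hz.1]; exact hz.2
  have hgf : Integrable (fun z => g z * f z) σ := Measure.integrable_toReal_rnDeriv.congr hchain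
  have hB : Integrable (fun z => g z * f z * Real.log (f z)) σ := by
    refine Integrable.mono' (g := fun z => g z * f z * C + f z * phi (g z) + 1)
      (((hgf.mul_const C).add hA).add (integrable_const 1)) (by fun_prop) ?_
    filter_upwards [hfC] with z hz
    exact (Real.norm_eq_abs _).trans_le (abs_mul_mul_log_le ENNReal.toReal_nonneg hz.1 hz.2)
  have hlog : (fun z => (ρ.rnDeriv σ z).toReal • Real.log (f z)) =ᵐ[σ]
      fun z => g z * f z * Real.log (f z) := by
    filter_upwards [hchain] with z hz
    rw [smul_eq_mul, hz]
  have hphi : (fun z => phi (ρ.rnDeriv σ z).toReal) =ᵐ[σ]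
      fun z => f z * phi (g z) + g z * f z * Real.log (f z) + (1 - f z) := by
    filter_upwards [hchain, hf0] with z hz hz0
    rw [hz]
    exact phi_mul hz0 ENNReal.toReal_nonneg
  have hAB : Integrable (fun z => f z * phi (g z) + g z * f z * Real.log (f z)) σ := hA.add hB
  have hC : Integrable (fun z => 1 - f z) σ := (integrable_const 1).sub hfi
  refine ⟨(integrable_rnDeriv_smul_iff hρσ).1 (hB.congr hlog.symm),
    KL_ne_top_iff.2 ⟨hρσ, (hAB.add hC).congr hphi.symm⟩, ?_⟩
  rw [toReal_KL hρσ, integral_congr_ae hphi, integral_add hAB hC, integral_add hA hB,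
    integral_sub (integrable_const 1) hfi, ← integral_rnDeriv_smul hρσ, integral_congr_ae hlog,
    hKLf, ← integral_eq_lintegral_of_nonneg_ae ?_ (by fun_prop)]
  · simp only [integral_const, smul_eq_mul, mul_one]
    ring
  · filter_upwards [hf0] with z hz using mul_nonneg hz (phi_nonneg ENNReal.toReal_nonneg)

end KL

theorem integral_log_le_toReal_KL_sub_add {Z : Type*} [MeasurableSpace Z] {ρ σ : Measure Z}
    [IsFiniteMeasure σ] [SigmaFinite ρ] (hρ : KL ρ σ ≠ ⊤) {f : Z → ℝ} (hf0 : 0 ≤ᵐ[σ] f)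
    (hf : Integrable f σ) (hpos : ∀ᵐ z ∂ρ, 0 < f z)
    (hlog : Integrable (fun z => Real.log (f z)) ρ) :
    ∫ z, Real.log (f z) ∂ρ ≤ (KL ρ σ).toReal - σ.real Set.univ + ∫ z, f z ∂σ := by
  obtain ⟨hac, hphi⟩ := KL_ne_top_iff.1 hρ
  have hphi1 : Integrable (fun z => phi (ρ.rnDeriv σ z).toReal - 1) σ :=
    hphi.sub (integrable_const 1)
  have hpt : ∀ᵐ z ∂σ, (ρ.rnDeriv σ z).toReal • Real.log (f z)
      ≤ phi (ρ.rnDeriv σ z).toReal - 1 + f z := by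
    filter_upwards [Measure.ae_rnDeriv_ne_zero_imp_of_ae σ hpos, hf0] with z hz hz0
    by_cases h : ρ.rnDeriv σ z = 0
    · simpa [h, phi] using hz0
    · exact mul_log_le_phi_sub_one_add ENNReal.toReal_nonneg (hz h)
  calc ∫ z, Real.log (f z) ∂ρ
      = ∫ z, (ρ.rnDeriv σ z).toReal • Real.log (f z) ∂σ := (integral_rnDeriv_smul hac).symm
    _ ≤ ∫ z, phi (ρ.rnDeriv σ z).toReal - 1 + f z ∂σ :=
      integral_mono_ae ((integrable_rnDeriv_smul_iff hac).2 hlog)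
        (hphi1.add hf) hpt
    _ = (KL ρ σ).toReal - σ.real Set.univ + ∫ z, f z ∂σ := by
      rw [integral_add hphi1 hf, integral_sub hphi (integrable_const 1),
        toReal_KL hac, integral_const, smul_eq_mul, mul_one]

namespace Coupling

variable {X Y : Type*} [MeasurableSpace X] [MeasurableSpace Y] {μ : Measure X} {ν : Measure Y}
  {π : Measure (X × Y)}

lemma isFiniteMeasure [IsFiniteMeasure μ] (hπ : π ∈ Coupling μ ν) : IsFiniteMeasure π := by
  constructor
  rw [← Set.preimage_univ (f := Prod.fst), ← Measure.map_apply measurable_fst .univ, hπ.1]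
  exact measure_lt_top μ _

lemma ae_fst (hπ : π ∈ Coupling μ ν) {P : X → Prop} (h : ∀ᵐ x ∂μ, P x) : ∀ᵐ p ∂π, P p.1 :=
  ae_of_ae_map measurable_fst.aemeasurable (hπ.1 ▸ h)

lemma ae_snd (hπ : π ∈ Coupling μ ν) {P : Y → Prop} (h : ∀ᵐ y ∂ν, P y) : ∀ᵐ p ∂π, P p.2 :=
  ae_of_ae_map measurable_snd.aemeasurable (hπ.2 ▸ h)

lemma ae_of_ae_fst (hπ : π ∈ Coupling μ ν) {P : X → Prop} (hP : MeasurableSet {x | P x})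
    (h : ∀ᵐ p ∂π, P p.1) : ∀ᵐ x ∂μ, P x := by
  rw [← hπ.1]
  exact (ae_map_iff measurable_fst.aemeasurable hP).2 h

lemma ae_of_ae_snd (hπ : π ∈ Coupling μ ν) {P : Y → Prop} (hP : MeasurableSet {y | P y})
    (h : ∀ᵐ p ∂π, P p.2) : ∀ᵐ y ∂ν, P y := by
  rw [← hπ.2]
  exact (ae_map_iff measurable_snd.aemeasurable hP).2 h

lemma integrable_comp_fst_iff (hπ : π ∈ Coupling μ ν) {g : X → ℝ} (hg : Measurable g) :
    Integrable (fun p => g p.1) π ↔ Integrable g μ := by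
  rw [← hπ.1, integrable_map_measure hg.aestronglyMeasurable measurable_fst.aemeasurable]
  rfl

lemma integrable_comp_snd_iff (hπ : π ∈ Coupling μ ν) {h : Y → ℝ} (hh : Measurable h) :
    Integrable (fun p => h p.2) π ↔ Integrable h ν := by
  rw [← hπ.2, integrable_map_measure hh.aestronglyMeasurable measurable_snd.aemeasurable]
  rfl

lemma integral_comp_fst (hπ : π ∈ Coupling μ ν) {g : X → ℝ} (hg : Measurable g) :
    ∫ p, g p.1 ∂π = ∫ x, g x ∂μ := by
  rw [← hπ.1, integral_map measurable_fst.aemeasurable hg.aestronglyMeasurable]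

lemma integral_comp_snd (hπ : π ∈ Coupling μ ν) {h : Y → ℝ} (hh : Measurable h) :
    ∫ p, h p.2 ∂π = ∫ y, h y ∂ν := by
  rw [← hπ.2, integral_map measurable_snd.aemeasurable hh.aestronglyMeasurable]

variable {u : X → ℝ} {v : Y → ℝ}

lemma ae_pos_of_absolutelyContinuous_withDensity (hπ : π ∈ Coupling μ ν) {σ : Measure (X × Y)}
    (hu : Measurable u) (hv : Measurable v) (hu0 : ∀ᵐ x ∂μ, 0 ≤ u x) (hv0 : ∀ᵐ y ∂ν, 0 ≤ v y)
    (hac : π ≪ σ.withDensity (prodDensity u v)) :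
    (∀ᵐ x ∂μ, 0 < u x) ∧ ∀ᵐ y ∂ν, 0 < v y := by
  have hne : ∀ᵐ p ∂π, u p.1 ≠ 0 ∧ v p.2 ≠ 0 := by
    filter_upwards [hac.ae_le ((ae_withDensity_iff (by unfold prodDensity; fun_prop)).2
      (ae_of_all _ fun _ => id))] with p hp
    exact mul_ne_zero_iff.1 fun h => hp (by simp [prodDensity, h])
  constructor
  · filter_upwards [hu0, ae_of_ae_fst hπ (hu (measurableSet_singleton 0).compl)
      (hne.mono fun _ h => h.1)] with x hx hx' using hx.lt_of_ne' hx'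
  · filter_upwards [hv0, ae_of_ae_snd hπ (hv (measurableSet_singleton 0).compl)
      (hne.mono fun _ h => h.2)] with y hy hy' using hy.lt_of_ne' hy'

lemma log_mul_ae_eq (hπ : π ∈ Coupling μ ν) (hupos : ∀ᵐ x ∂μ, 0 < u x)
    (hvpos : ∀ᵐ y ∂ν, 0 < v y) :
    (fun p => Real.log (u p.1 * v p.2)) =ᵐ[π] fun p => Real.log (u p.1) + Real.log (v p.2) := by
  filter_upwards [ae_fst hπ hupos, ae_snd hπ hvpos] with p hu hv
  exact Real.log_mul hu.ne' hv.ne'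

lemma integrable_log_of_integrable_log_mul [IsFiniteMeasure μ] (hπ : π ∈ Coupling μ ν)
    {Cu Cv : ℝ} (hu : Measurable u) (hv : Measurable v) (hub : ∀ᵐ x ∂μ, 0 < u x ∧ u x ≤ Cu)
    (hvb : ∀ᵐ y ∂ν, 0 < v y ∧ v y ≤ Cv)
    (hlog : Integrable (fun p => Real.log (u p.1 * v p.2)) π) :
    Integrable (fun x => Real.log (u x)) μ ∧ Integrable (fun y => Real.log (v y)) ν := by
  have := isFiniteMeasure hπ
  have hsum := hlog.congr (log_mul_ae_eq hπ (hub.mono fun _ h => h.1) (hvb.mono fun _ h => h.1))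
  have hlog_le {t C : ℝ} (h : 0 < t ∧ t ≤ C) : Real.log t ≤ C := (Real.log_le_self h.1.le).trans h.2
  have hlu : Integrable (fun p => Real.log (u p.1)) π :=
    integrable_of_integrable_add_of_ae_le (Measurable.aestronglyMeasurable (by fun_prop)) hsum
      (ae_fst hπ (hub.mono fun _ => hlog_le)) (ae_snd hπ (hvb.mono fun _ => hlog_le))
  refine ⟨(integrable_comp_fst_iff hπ (by fun_prop)).1 hlu,
    (integrable_comp_snd_iff hπ (by fun_prop)).1 ((hsum.sub hlu).congr ?_)⟩
  exact ae_of_all _ fun p => by simp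

lemma integral_log_mul (hπ : π ∈ Coupling μ ν) (hu : Measurable u) (hv : Measurable v)
    (hupos : ∀ᵐ x ∂μ, 0 < u x) (hvpos : ∀ᵐ y ∂ν, 0 < v y)
    (hlu : Integrable (fun x => Real.log (u x)) μ) (hlv : Integrable (fun y => Real.log (v y)) ν) :
    Integrable (fun p => Real.log (u p.1 * v p.2)) π ∧
      ∫ p, Real.log (u p.1 * v p.2) ∂π = ∫ x, Real.log (u x) ∂μ + ∫ y, Real.log (v y) ∂ν := by
  have hlu' := (integrable_comp_fst_iff hπ (by fun_prop)).2 hlu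
  have hlv' := (integrable_comp_snd_iff hπ (by fun_prop)).2 hlv
  refine ⟨(hlu'.add hlv').congr (log_mul_ae_eq hπ hupos hvpos).symm, ?_⟩
  rw [integral_congr_ae (log_mul_ae_eq hπ hupos hvpos), integral_add hlu' hlv',
    integral_comp_fst hπ (g := fun x => Real.log (u x)) (by fun_prop),
    integral_comp_snd hπ (h := fun y => Real.log (v y)) (by fun_prop)]

end Coupling

section Kmeas

variable {X Y : Type*} [MeasurableSpace X] [MeasurableSpace Y] {μ : Measure X} {ν : Measure Y}
  {c : X × Y → ℝ} {ε : ℝ}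

lemma isFiniteMeasure_Kmeas [IsFiniteMeasure μ] [IsFiniteMeasure ν] (hc0 : ∀ p, 0 ≤ c p)
    (hε : 0 ≤ ε) : IsFiniteMeasure (Kmeas μ ν c ε) := by
  refine isFiniteMeasure_withDensity (ne_top_of_le_ne_top (measure_ne_top (μ.prod ν) Set.univ) ?_)
  calc ∫⁻ p, ENNReal.ofReal (Real.exp (-c p / ε)) ∂μ.prod ν
      ≤ ∫⁻ _, 1 ∂μ.prod ν := lintegral_mono fun p => ENNReal.ofReal_le_one.2 <|
        Real.exp_le_one_iff.2 (by rw [neg_div]; exact neg_nonpos.2 (div_nonneg (hc0 p) hε))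
    _ = μ.prod ν Set.univ := lintegral_one

lemma ae_Kmeas_of_ae [SFinite ν] {P : X → Prop} {Q : Y → Prop} (hP : ∀ᵐ x ∂μ, P x)
    (hQ : ∀ᵐ y ∂ν, Q y) : ∀ᵐ p ∂Kmeas μ ν c ε, P p.1 ∧ Q p.2 :=
  (withDensity_absolutelyContinuous _ _).ae_le <|
    (Measure.quasiMeasurePreserving_fst.ae hP).and (Measure.quasiMeasurePreserving_snd.ae hQ)

end Kmeas

theorem primal_dual_gap_bound_general
    {X Y : Type*} [MeasurableSpace X] [MeasurableSpace Y]
    (μ : Measure X) (ν : Measure Y) [IsProbabilityMeasure μ] [IsProbabilityMeasure ν]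
    (c : X × Y → ℝ) (hc0 : ∀ p, 0 ≤ c p) (ε : ℝ) (hε : 0 < ε)
    (πopt : Measure (X × Y)) (hπopt : πopt ∈ Coupling μ ν)
    (πt : Measure (X × Y))
    (uh : X → ℝ) (vh : Y → ℝ) (huh : LinftyPlus μ uh) (hvh : LinftyPlus ν vh)
    (πh : Measure (X × Y)) (hπh : πh = (Kmeas μ ν c ε).withDensity (prodDensity uh vh))
    (hπtfeas : πt ∈ Coupling μ ν) :
    KL πt (Kmeas μ ν c ε) ≤ KL πt πh + KL πopt (Kmeas μ ν c ε) := by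
  obtain ⟨huhm, huh0, Cu, huC⟩ := huh
  obtain ⟨hvhm, hvh0, Cv, hvC⟩ := hvh
  set K := Kmeas μ ν c ε
  rcases eq_or_ne (KL πt πh) ⊤ with hth | hth
  · simp [hth]
  rcases eq_or_ne (KL πopt K) ⊤ with hoK | hoK
  · simp [hoK]
  have := isFiniteMeasure_Kmeas (μ := μ) (ν := ν) hc0 hε.le
  have := Coupling.isFiniteMeasure hπtfeas
  have := Coupling.isFiniteMeasure hπopt
  have hfK : ∀ᵐ p ∂K, 0 ≤ uh p.1 * vh p.2 ∧ uh p.1 * vh p.2 ≤ Cu * Cv := by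
    filter_upwards [ae_Kmeas_of_ae (huh0.and huC) (hvh0.and hvC)] with p ⟨⟨hu0, huC⟩, hv0, hvC⟩
    exact ⟨mul_nonneg hu0 hv0, mul_le_mul huC hvC hv0 (hu0.trans huC)⟩
  replace hπh : πh = K.withDensity fun p => ENNReal.ofReal (uh p.1 * vh p.2) := hπh
  subst hπh
  obtain ⟨hlogt, htK, hdecomp⟩ :=
    toReal_KL_eq_toReal_KL_withDensity_add (by fun_prop) hfK hth
  obtain ⟨hupos, hvpos⟩ := Coupling.ae_pos_of_absolutelyContinuous_withDensity hπtfeas huhm hvhm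
    huh0 hvh0 (KL_ne_top_iff.1 hth).1
  obtain ⟨hlu, hlv⟩ := Coupling.integrable_log_of_integrable_log_mul hπtfeas huhm hvhm
    (hupos.and huC) (hvpos.and hvC) hlogt
  obtain ⟨-, ht⟩ := Coupling.integral_log_mul hπtfeas huhm hvhm hupos hvpos hlu hlv
  obtain ⟨hlogo, ho⟩ := Coupling.integral_log_mul hπopt huhm hvhm hupos hvpos hlu hlv
  have hweak := integral_log_le_toReal_KL_sub_add hoK (hfK.mono fun _ h => h.1)
    (Integrable.of_bound (by fun_prop) (Cu * Cv) (hfK.mono fun _ h => by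
      rw [Real.norm_of_nonneg h.1]; exact h.2))
    ((Coupling.ae_fst hπopt hupos).and (Coupling.ae_snd hπopt hvpos) |>.mono
      fun _ h => mul_pos h.1 h.2) hlogo
  rw [← ENNReal.ofReal_toReal htK, ← ENNReal.ofReal_toReal hth, ← ENNReal.ofReal_toReal hoK,
    ← ENNReal.ofReal_add ENNReal.toReal_nonneg ENNReal.toReal_nonneg]
  exact ENNReal.ofReal_le_ofReal (by linarith)

/-- Lemma 3.5, primal-dual gap bound: for a feasible plan `π̃`
built from scaled kernels over a partition and any `π̂ = (û ⊗ v̂)·K`,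
`Δ(π̃) ≤ KL(π̃|π̂)`, i.e. `KL(π̃|K) ≤ KL(π̃|π̂) + KL(π*|K)`. -/
theorem primal_dual_gap_bound
    {X Y : Type*} [MetricSpace X] [CompactSpace X] [MeasurableSpace X] [BorelSpace X]
    [MetricSpace Y] [CompactSpace Y] [MeasurableSpace Y] [BorelSpace Y]
    (μ : Measure X) (ν : Measure Y) [IsProbabilityMeasure μ] [IsProbabilityMeasure ν]
    (c : X × Y → ℝ) (hc : Measurable c) (cmax : ℝ)
    (hc0 : ∀ p, 0 ≤ c p) (hcmax : ∀ p, c p ≤ cmax)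
    (ε : ℝ) (hε : 0 < ε)
    (πopt : Measure (X × Y)) (hπopt : πopt ∈ Coupling μ ν)
    (hmin : ∀ π ∈ Coupling μ ν, KL πopt (Kmeas μ ν c ε) ≤ KL π (Kmeas μ ν c ε))
    {ι : Type*} [Fintype ι]
    (Xc : ι → Set X) (hXm : ∀ i, MeasurableSet (Xc i))
    (hXd : ∀ i j, i ≠ j → Disjoint (Xc i) (Xc j)) (hXu : (⋃ i, Xc i) = Set.univ)
    (ut : ι → X → ℝ) (vt : ι → Y → ℝ)
    (hut : ∀ i, LinftyPlus μ (ut i)) (hvt : ∀ i, LinftyPlus ν (vt i))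
    (πt : Measure (X × Y))
    (hπt : πt = ∑ i,
      ((Kmeas μ ν c ε).restrict (Xc i ×ˢ Set.univ)).withDensity (prodDensity (ut i) (vt i)))
    (uh : X → ℝ) (vh : Y → ℝ) (huh : LinftyPlus μ uh) (hvh : LinftyPlus ν vh)
    (πh : Measure (X × Y)) (hπh : πh = (Kmeas μ ν c ε).withDensity (prodDensity uh vh))
    (hπtfeas : πt ∈ Coupling μ ν) :
    KL πt (Kmeas μ ν c ε) ≤ KL πt πh + KL πopt (Kmeas μ ν c ε) :=
  primal_dual_gap_bound_general μ ν c hc0 ε hε πopt hπopt πt uh vh huh hvh πh hπh hπtfeas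
end
end

section
/- (Approximate triangle inequality for φ) Let L ∈ (0,∞) and n ∈ ℕ with n ≥ 1. Then for all (s₁,…,s_n) ∈ [0,L]^n one has φ(∏_{k=1}^n s_k) ≤ C · Σ_{k=1}^n φ(s_k), where C = n·max{2, L^{n−1}} and φ(s) := s·log s − s + 1 for s > 0, with φ(0) := 1. -/
noncomputable section

/-! The identity `φ(ab) = b φ(a) + a φ(b) + (a - 1)(b - 1)`, valid for all real `a, b` thanks to
`log 0 = 0`, drives an induction on the number of factors. Cross terms are controlled by
`(t - 1)² ≤ 2 max(1, t) φ(t)`, which follows from `φ(t) = ∫₁ᵗ log u du` and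
`1 - 1/u ≤ log u ≤ u - 1`. Bounding the cross term `(∏ sᵢ - 1)(b - 1)` of a partial product by its
own induction, rather than through `φ(∏ sᵢ)`, keeps the constant linear in `n`: with
`K = max(1, L)` one gets `φ(∏ sₖ) ≤ n K^(n-1) Σ φ(sₖ)`. -/

open Real intervalIntegral Set Finset InformationTheory

lemma phi_nonneg_s17 {t : ℝ} (ht : 0 ≤ t) : 0 ≤ phi t := by
  simpa [phi, klFun_apply, add_sub_right_comm] using klFun_nonneg ht

lemma phi_eq_integral_log (t : ℝ) : phi t = ∫ u in (1 : ℝ)..t, log u := by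
  simp [integral_log, phi]

lemma sq_sub_one_le_two_mul_phi_of_le_one {t : ℝ} (ht₀ : 0 ≤ t) (ht₁ : t ≤ 1) :
    (t - 1) ^ 2 ≤ 2 * phi t := by
  have hlog : ∫ u in t..1, log u ≤ ∫ u in t..1, (u - 1) :=
    integral_mono_on_of_le_Ioo ht₁ intervalIntegrable_log'
      ((by fun_prop : Continuous _).intervalIntegrable _ _)
      fun u hu => log_le_sub_one_of_pos (ht₀.trans_lt hu.1)
  rw [phi_eq_integral_log, integral_symm]
  simp only [integral_comp_sub_right (fun x => x), integral_id] at hlog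
  linarith

lemma sq_sub_one_le_two_mul_mul_phi_of_one_le {t : ℝ} (ht : 1 ≤ t) :
    (t - 1) ^ 2 ≤ 2 * t * phi t := by
  have hlog : ∫ u in (1 : ℝ)..t, (u - 1) ≤ ∫ u in (1 : ℝ)..t, t * log u := by
    refine integral_mono_on ht ((by fun_prop : Continuous _).intervalIntegrable _ _)
      (intervalIntegrable_log'.const_mul t) fun u hu => ?_
    have hu₀ : 0 < u := one_pos.trans_le hu.1
    calc u - 1 = u * (1 - u⁻¹) := by field_simp
      _ ≤ u * log u := mul_le_mul_of_nonneg_left (one_sub_inv_le_log_of_pos hu₀) hu₀.le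
      _ ≤ t * log u := mul_le_mul_of_nonneg_right hu.2 (log_nonneg hu.1)
  rw [integral_const_mul, ← phi_eq_integral_log] at hlog
  simp only [integral_comp_sub_right (fun x => x), integral_id] at hlog
  linarith

lemma sq_sub_one_le_two_mul_mul_phi {K t : ℝ} (hK : 1 ≤ K) (ht : t ∈ Icc 0 K) :
    (t - 1) ^ 2 ≤ 2 * K * phi t := by
  have hphi : 0 ≤ phi t := phi_nonneg_s17 ht.1
  rcases le_total t 1 with ht₁ | ht₁
  · nlinarith [sq_sub_one_le_two_mul_phi_of_le_one ht.1 ht₁]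
  · nlinarith [sq_sub_one_le_two_mul_mul_phi_of_one_le ht₁, ht.2]

lemma sub_one_mul_sub_one_le {K a b : ℝ} (hK : 1 ≤ K) (ha : a ∈ Icc 0 K) (hb : b ∈ Icc 0 K) :
    (a - 1) * (b - 1) ≤ K * (phi a + phi b) := by
  nlinarith [sq_sub_one_le_two_mul_mul_phi hK ha, sq_sub_one_le_two_mul_mul_phi hK hb,
    sq_nonneg (a - b)]

lemma phi_mul_s17 (a b : ℝ) : phi (a * b) = b * phi a + a * phi b + (a - 1) * (b - 1) := by
  rcases eq_or_ne a 0 with rfl | ha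
  · simp [phi]
  rcases eq_or_ne b 0 with rfl | hb
  · simp [phi]
  simp only [phi, log_mul ha hb]
  ring

section
variable {ι : Type*} {K : ℝ} {s : ι → ℝ}

lemma prod_mem_Icc_pow {t : Finset ι} (hs : ∀ i ∈ t, s i ∈ Icc 0 K) :
    ∏ i ∈ t, s i ∈ Icc 0 (K ^ #t) :=
  ⟨prod_nonneg fun i hi => (hs i hi).1,
    (prod_le_prod (fun i hi => (hs i hi).1) fun i hi => (hs i hi).2).trans_eq (prod_const K)⟩

lemma prod_sub_one_mul_sub_one_le (hK : 1 ≤ K) (t : Finset ι) (hs : ∀ i ∈ t, s i ∈ Icc 0 K)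
    {b : ℝ} (hb : b ∈ Icc 0 K) :
    (∏ i ∈ t, s i - 1) * (b - 1) ≤ K ^ #t * (∑ i ∈ t, phi (s i) + #t * phi b) := by
  induction t using Finset.cons_induction with
  | empty => simp
  | cons a t _ ih =>
    have hst : ∀ i ∈ t, s i ∈ Icc 0 K := fun i hi => hs i (mem_cons_of_mem hi)
    have hsa : s a ∈ Icc 0 K := hs a (mem_cons_self a t)
    obtain ⟨hprod₀, hprodK⟩ := prod_mem_Icc_pow hst
    have hsum₀ : 0 ≤ ∑ i ∈ t, phi (s i) := sum_nonneg fun i hi => phi_nonneg_s17 (hst i hi).1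
    have hpow : K ^ #t ≤ K ^ (#t + 1) := pow_le_pow_right₀ hK (Nat.le_succ _)
    have h₁ : (∏ i ∈ t, s i) * ((s a - 1) * (b - 1)) ≤ K ^ #t * (K * (phi (s a) + phi b)) :=
      (mul_le_mul_of_nonneg_left (sub_one_mul_sub_one_le hK hsa hb) hprod₀).trans
        (mul_le_mul_of_nonneg_right hprodK (by positivity [phi_nonneg_s17 hsa.1, phi_nonneg_s17 hb.1]))
    have h₂ : (∏ i ∈ t, s i - 1) * (b - 1) ≤ K ^ (#t + 1) * (∑ i ∈ t, phi (s i) + #t * phi b) :=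
      (ih hst).trans (mul_le_mul_of_nonneg_right hpow (by positivity [phi_nonneg_s17 hb.1]))
    rw [prod_cons, sum_cons, card_cons]
    push_cast
    linear_combination h₁ + h₂

lemma phi_prod_le_card_mul_pow_mul_sum (hK : 1 ≤ K) (t : Finset ι) (hs : ∀ i ∈ t, s i ∈ Icc 0 K) :
    phi (∏ i ∈ t, s i) ≤ #t * K ^ (#t - 1) * ∑ i ∈ t, phi (s i) := by
  induction t using Finset.cons_induction with
  | empty => simp [phi]
  | cons a t _ ih =>
    have hst : ∀ i ∈ t, s i ∈ Icc 0 K := fun i hi => hs i (mem_cons_of_mem hi)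
    have hsa : s a ∈ Icc 0 K := hs a (mem_cons_self a t)
    obtain ⟨hprod₀, hprodK⟩ := prod_mem_Icc_pow hst
    have hpow : K * (#t * K ^ (#t - 1)) = #t * K ^ #t := by
      rcases Nat.eq_zero_or_pos #t with h | h
      · simp [h]
      · rw [mul_left_comm, mul_comm K, pow_sub_one_mul h.ne']
    have h₁ : (∏ i ∈ t, s i) * phi (s a) ≤ K ^ #t * phi (s a) :=
      mul_le_mul_of_nonneg_right hprodK (phi_nonneg_s17 hsa.1)
    have h₂ : s a * phi (∏ i ∈ t, s i) ≤ #t * K ^ #t * ∑ i ∈ t, phi (s i) := by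
      rw [← hpow, mul_assoc]
      exact mul_le_mul hsa.2 (ih hst) (phi_nonneg_s17 hprod₀) (zero_le_one.trans hK)
    have h₃ := prod_sub_one_mul_sub_one_le hK t hst hsa
    rw [prod_cons, sum_cons, card_cons, phi_mul_s17, Nat.add_sub_cancel]
    push_cast
    linear_combination h₁ + h₂ + h₃
end

theorem phi_prod_le_general (L : ℝ) (n : ℕ)
    (s : Fin n → ℝ) (hs : ∀ k, s k ∈ Set.Icc (0 : ℝ) L) :
    phi (∏ k, s k) ≤ (n : ℝ) * max 2 (L ^ (n - 1)) * ∑ k, phi (s k) := by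
  have hpow : max 1 L ^ (n - 1) ≤ max 2 (L ^ (n - 1)) := by
    rcases le_total L 1 with hL | hL
    · rw [max_eq_left hL, one_pow]
      exact one_le_two.trans (le_max_left _ _)
    · rw [max_eq_right hL]
      exact le_max_right _ _
  calc phi (∏ k, s k) ≤ n * max 1 L ^ (n - 1) * ∑ k, phi (s k) := by
        simpa using phi_prod_le_card_mul_pow_mul_sum (le_max_left 1 L) univ
          fun k _ => ⟨(hs k).1, (hs k).2.trans (le_max_right 1 L)⟩
    _ ≤ n * max 2 (L ^ (n - 1)) * ∑ k, phi (s k) := by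
        gcongr
        exact sum_nonneg fun k _ => phi_nonneg_s17 (hs k).1

/-- Lemma A.1, approximate triangle inequality for `phi`:
for `L > 0`, `n ≥ 1` and `s₁,…,s_n ∈ [0,L]`,
`phi (∏ₖ sₖ) ≤ n·max{2, L^{n−1}} · Σₖ phi (sₖ)`. -/
theorem phi_prod_le (L : ℝ) (hL : 0 < L) (n : ℕ) (hn : 1 ≤ n)
    (s : Fin n → ℝ) (hs : ∀ k, s k ∈ Set.Icc (0 : ℝ) L) :
    phi (∏ k, s k) ≤ (n : ℝ) * max 2 (L ^ (n - 1)) * ∑ k, phi (s k) :=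
  phi_prod_le_general L n s hs
end
end

section
/- (Validity of multi-scale refinement) With the discrete refinement setup, the measures ν_i⁰ defined by ν_i⁰({y}) := ν({y}) · ν̂_{Pa(i)}({pa(y)})/ν̂({pa(y)}) · μ(X_i)/μ̂(X̂_{Pa(i)}) satisfy Σ_{i∈I} ν_i⁰ = ν and ‖ν_i⁰‖ = μ(X_i) for every i ∈ I. -/
/-!
Grouping the fine cells `i` by their parent `j = Pa i`, the masses `μ(X_i)` of the children of
`j` add up to `μ̂(X̂_j)`, which cancels the denominator; hence
`Σ_i ν_i⁰({y}) = ν({y}) Σ_j ν̂_j({pa y}) / ν̂({pa y}) = ν({y})`. Grouping the points `y` by their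
image `pa y`, the masses `ν({y})` of a fibre add up to `ν̂({pa y})`; hence
`‖ν_i⁰‖ = ‖ν̂_{Pa i}‖ μ(X_i) / μ̂(X̂_{Pa i}) = μ(X_i)`. Vanishing denominators are harmless because
`ν({y}) ≤ ν̂({pa y})` and `ν̂_j ≤ ν̂`, and the latter also makes `μ̂(X̂_j) = ‖ν̂_j‖` finite.
-/

open Finset Function
open scoped ENNReal

theorem ENNReal.div_mul_cancel_of_le {a b : ℝ≥0∞} (hab : a ≤ b) (hb : b ≠ ⊤) : a / b * b = a := by
  rcases eq_or_ne b 0 with rfl | hb0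
  · simp [nonpos_iff_eq_zero.1 hab]
  · exact ENNReal.div_mul_cancel hb0 hb

theorem ENNReal.sum_mul_div_eq_sum_of_sum_fiber {ι κ : Type*} [Fintype ι] [Fintype κ]
    [DecidableEq κ] (P : ι → κ) (a : κ → ℝ≥0∞) (m : ι → ℝ≥0∞) (M : κ → ℝ≥0∞)
    (hM : ∀ j, ∑ i with P i = j, m i = M j) (hM0 : ∀ j, M j ≠ 0) (hMtop : ∀ j, M j ≠ ⊤) :
    ∑ i, a (P i) * m i / M (P i) = ∑ j, a j := by
  rw [← sum_fiberwise univ P]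
  refine sum_congr rfl fun j _ => ?_
  calc ∑ i with P i = j, a (P i) * m i / M (P i)
      = ∑ i with P i = j, a j * m i / M j :=
        sum_congr rfl fun i hi => by rw [(mem_filter.1 hi).2]
    _ = a j * (∑ i with P i = j, m i) / M j := by
        simp only [div_eq_mul_inv, mul_sum, sum_mul]
    _ = a j := by rw [hM, ENNReal.mul_div_cancel_right (hM0 j) (hMtop j)]

namespace MeasureTheory

theorem sum_measure_fiber_eq_of_subset {α ι κ : Type*} [MeasurableSpace α] [Fintype ι]
    [DecidableEq κ] (μ : Measure α) {s : ι → Set α} {t : κ → Set α}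
    (hs : ∀ i, MeasurableSet (s i)) (hsd : Pairwise (Disjoint on s)) (hsu : ⋃ i, s i = Set.univ)
    (htd : Pairwise (Disjoint on t)) (P : ι → κ) (hP : ∀ i, s i ⊆ t (P i)) (j : κ) :
    ∑ i with P i = j, μ (s i) = μ (t j) := by
  have ht : t j = ⋃ i ∈ univ.filter (P · = j), s i := by
    refine subset_antisymm (fun x hx => ?_)
      (Set.iUnion₂_subset fun i hi => (mem_filter.1 hi).2 ▸ hP i)
    obtain ⟨i, hxi⟩ := Set.mem_iUnion.1 (hsu.symm ▸ Set.mem_univ x : x ∈ ⋃ i, s i)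
    have hPi : P i = j := by_contra fun hne => (htd hne).ne_of_mem (hP i hxi) hx rfl
    exact Set.mem_biUnion (mem_filter.2 ⟨mem_univ i, hPi⟩) hxi
  rw [ht, measure_biUnion_finset (hsd.set_pairwise _) fun i _ => hs i]

theorem sum_mul_div_map_singleton {α β : Type*} [MeasurableSpace α] [MeasurableSpace β]
    [Fintype α] [Fintype β] [MeasurableSingletonClass α] [MeasurableSingletonClass β]
    (ν : Measure α) [IsFiniteMeasure ν] (f : α → β) (ρ : Measure β) (hρ : ρ ≤ ν.map f) :
    ∑ a, ν {a} * ρ {f a} / ν.map f {f a} = ρ Set.univ := by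
  classical
  have hfib : ∀ b, ∑ a with f a = b, ν {a} = ν.map f {b} := fun b => by
    rw [sum_measure_singleton,
      Measure.map_apply (measurable_of_finite f) (measurableSet_singleton b)]
    congr 1
    ext a
    simp
  calc ∑ a, ν {a} * ρ {f a} / ν.map f {f a}
      = ∑ b, (∑ a with f a = b, ν {a}) * (ρ {b} / ν.map f {b}) := by
        rw [← sum_fiberwise univ f]
        refine sum_congr rfl fun b _ => ?_
        rw [sum_mul]
        exact sum_congr rfl fun a ha => by rw [(mem_filter.1 ha).2, mul_div_assoc]
    _ = ∑ b, ρ {b} := sum_congr rfl fun b _ => by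
        rw [hfib, mul_comm, ENNReal.div_mul_cancel_of_le (hρ {b}) (measure_ne_top _ _)]
    _ = ρ Set.univ := by rw [sum_measure_singleton, coe_univ]

end MeasureTheory

open MeasureTheory

theorem refinement_valid_general
    {X Y Xh Yh : Type*} [Fintype X] [Fintype Y] [Fintype Xh] [Fintype Yh]
    [MeasurableSpace X] [MeasurableSpace Y] [MeasurableSpace Xh] [MeasurableSpace Yh]
    [MeasurableSingletonClass X] [MeasurableSingletonClass Y]
    [MeasurableSingletonClass Xh] [MeasurableSingletonClass Yh]
    (pa : X → Xh) (paY : Y → Yh)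
    (μ : Measure X) (ν : Measure Y) [IsFiniteMeasure ν]
    {ιf ιc : Type*} [Fintype ιf] [Fintype ιc]
    (Xp : ιf → Set X) (hXpd : ∀ i j, i ≠ j → Disjoint (Xp i) (Xp j))
    (hXpu : (⋃ i, Xp i) = Set.univ)
    (Xhp : ιc → Set Xh) (hXhpd : ∀ j j', j ≠ j' → Disjoint (Xhp j) (Xhp j'))
    (hXhppos : ∀ j, 0 < (μ.map pa) (Xhp j))
    (Pa : ιf → ιc) (hPa : ∀ i, ∀ x ∈ Xp i, pa x ∈ Xhp (Pa i))
    (νhat : ιc → Measure Yh)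
    (hνhatsum : (∑ j, νhat j) = ν.map paY)
    (hνhatmass : ∀ j, νhat j Set.univ = (μ.map pa) (Xhp j))
    (νi0 : ιf → Measure Y)
    (hνi0 : ∀ i (y : Y), νi0 i {y} =
      ν {y} * νhat (Pa i) {paY y} / (ν.map paY) {paY y} *
        μ (Xp i) / (μ.map pa) (Xhp (Pa i))) :
    (∑ i, νi0 i) = ν ∧ ∀ i, νi0 i Set.univ = μ (Xp i) := by
  classical
  have hle : ∀ j, νhat j ≤ ν.map paY := fun j =>
    hνhatsum ▸ single_le_sum (fun _ _ => Measure.zero_le _) (mem_univ j)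
  have hcoarse_ne_top : ∀ j, μ.map pa (Xhp j) ≠ ⊤ := fun j =>
    hνhatmass j ▸ ne_top_of_le_ne_top (measure_ne_top _ _) (hle j Set.univ)
  have hfiber : ∀ j, ∑ i with Pa i = j, μ (Xp i) = μ.map pa (Xhp j) := fun j => by
    rw [Measure.map_apply (measurable_of_finite pa) (Set.toFinite _).measurableSet]
    exact sum_measure_fiber_eq_of_subset μ (fun i => (Set.toFinite _).measurableSet)
      (fun i i' => hXpd i i') hXpu (fun j j' h => (hXhpd j j' h).preimage pa) Pa hPa j
  refine ⟨Measure.ext_iff_singleton.2 fun y => ?_, fun i => ?_⟩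
  · rw [Measure.finsetSum_apply]
    simp_rw [hνi0]
    rw [ENNReal.sum_mul_div_eq_sum_of_sum_fiber Pa
      (fun j => ν {y} * νhat j {paY y} / ν.map paY {paY y}) _ _ hfiber
      (fun j => (hXhppos j).ne') hcoarse_ne_top]
    have hνy : ν {y} ≤ ν.map paY {paY y} :=
      (measure_mono fun y' (h : y' = y) => by simp [h]).trans
        (Measure.le_map_apply (measurable_of_finite paY).aemeasurable _)
    calc ∑ j, ν {y} * νhat j {paY y} / ν.map paY {paY y}
        = ν {y} * (∑ j, νhat j {paY y}) / ν.map paY {paY y} := by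
          simp only [div_eq_mul_inv, mul_sum, sum_mul]
      _ = ν {y} := by
          rw [← Measure.finsetSum_apply, hνhatsum, ENNReal.mul_div_right_comm,
            ENNReal.div_mul_cancel_of_le hνy (measure_ne_top _ _)]
  · calc νi0 i Set.univ = ∑ y, νi0 i {y} := by rw [sum_measure_singleton, coe_univ]
      _ = (∑ y, ν {y} * νhat (Pa i) {paY y} / ν.map paY {paY y}) *
            (μ (Xp i) / μ.map pa (Xhp (Pa i))) := by simp only [hνi0, mul_div_assoc, sum_mul]
      _ = μ (Xp i) := by
          rw [sum_mul_div_map_singleton ν paY _ (hle _), hνhatmass,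
            ENNReal.mul_div_cancel (hXhppos _).ne' (hcoarse_ne_top _)]

/-- Proposition 5.1, validity of multi-scale refinement: in the
discrete refinement setup, the refined basic cell marginals
`νᵢ⁰({y}) = ν({y})·ν̂_{Pa(i)}({pa(y)})/ν̂({pa(y)}) · μ(Xᵢ)/μ̂(X̂_{Pa(i)})`
satisfy `Σᵢ νᵢ⁰ = ν` and `‖νᵢ⁰‖ = μ(Xᵢ)` for every `i`. -/
theorem refinement_valid
    {X Y Xh Yh : Type*} [Fintype X] [Fintype Y] [Fintype Xh] [Fintype Yh]
    [MeasurableSpace X] [MeasurableSpace Y] [MeasurableSpace Xh] [MeasurableSpace Yh]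
    [MeasurableSingletonClass X] [MeasurableSingletonClass Y]
    [MeasurableSingletonClass Xh] [MeasurableSingletonClass Yh]
    (pa : X → Xh) (paY : Y → Yh) (hpa : Measurable pa) (hpaY : Measurable paY)
    (μ : Measure X) (ν : Measure Y) [IsFiniteMeasure μ] [IsFiniteMeasure ν]
    {ιf ιc : Type*} [Fintype ιf] [Fintype ιc]
    (Xp : ιf → Set X) (hXpd : ∀ i j, i ≠ j → Disjoint (Xp i) (Xp j))
    (hXpu : (⋃ i, Xp i) = Set.univ) (hXppos : ∀ i, 0 < μ (Xp i))
    (Xhp : ιc → Set Xh) (hXhpd : ∀ j j', j ≠ j' → Disjoint (Xhp j) (Xhp j'))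
    (hXhpu : (⋃ j, Xhp j) = Set.univ) (hXhppos : ∀ j, 0 < (μ.map pa) (Xhp j))
    (Pa : ιf → ιc) (hPa : ∀ i, ∀ x ∈ Xp i, pa x ∈ Xhp (Pa i))
    (νhat : ιc → Measure Yh)
    (hνhatsum : (∑ j, νhat j) = ν.map paY)
    (hνhatmass : ∀ j, νhat j Set.univ = (μ.map pa) (Xhp j))
    (νi0 : ιf → Measure Y)
    (hνi0 : ∀ i (y : Y), νi0 i {y} =
      ν {y} * νhat (Pa i) {paY y} / (ν.map paY) {paY y} *
        μ (Xp i) / (μ.map pa) (Xhp (Pa i))) :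
    (∑ i, νi0 i) = ν ∧ ∀ i, νi0 i Set.univ = μ (Xp i) :=
  refinement_valid_general pa paY μ ν Xp hXpd hXpu Xhp hXhpd hXhppos Pa hPa νhat hνhatsum hνhatmass
    νi0 hνi0
end
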